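/- Let v be an inner vertex of a branch decomposition T with children v1 and v2, let (Φ,Ψ) be a shape for v, let τ : X_v → D have shape (Φ,Ψ), and let τ1, τ2 be the restrictions of τ to X_{v1}, X_{v2}. Then there is a unique pair of shapes (Φ1,Ψ1) for v1 and (Φ2,Ψ2) for v2 such that (Φ,Ψ), (Φ1,Ψ1), (Φ2,Ψ2) are linked shapes, τ1 has shape (Φ1,Ψ1), and τ2 has shape (Φ2,Ψ2). -/

import Mathlib

open Finset

/-- A (translated) separable system with variable type `V`, constraint type `C` and
finite domain `D`.  The constraint set is `C = Cin ∪ Cge` (disjointly), where `Cin`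
is the set of constraints of type `∈` (with target set `Γ c` whose largest element
is the threshold `γ c`) and `Cge` is the set of constraints of type `≥` (with
threshold `γ c`).  Every constraint `c` has nonnegative summands `g c x : D → ℕ`. -/
structure SepSystem (V C D : Type) where
  /-- the summand functions `g^c_x : D → ℤ≥0` -/
  g : C → V → D → ℕ
  /-- the thresholds `γ^c` -/
  γ : C → ℕ
  /-- the target sets `Γ^c` for constraints in `C^∈` -/
  Γ : C → Finset ℕ
  /-- the set of constraints of type `∈` -/
  Cin : Finset C
  /-- the set of constraints of type `≥` -/
  Cge : Finset C
  /-- `C^∈` and `C^≥` are disjoint -/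
  disj : Disjoint Cin Cge
  /-- every constraint is in `C^∈ ∪ C^≥` -/
  cover : ∀ c, c ∈ Cin ∨ c ∈ Cge
  /-- for `c ∈ C^∈`, `γ^c` belongs to `Γ^c` … -/
  gammaMem : ∀ c ∈ Cin, γ c ∈ Γ c
  /-- … and is its largest element -/
  gammaMax : ∀ c ∈ Cin, ∀ a ∈ Γ c, a ≤ γ c

namespace SepSystem

variable {V C D : Type} [DecidableEq V] [DecidableEq C] [Fintype V] [Fintype C]

/-- The constraint bound `cb^c(τ)` of the assignment `τ` restricted to `X'`. -/
def cb (S : SepSystem V C D) (X' : Finset V) (τ : V → D) (c : C) : ℕ :=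
  ∑ x ∈ X', S.g c x (τ x)

/-- The map `C'/τ` (for `τ` restricted to `X'`), encoded as the function `C → ℕ`
that vanishes outside `C'`. -/
def cdiv (S : SepSystem V C D) (C' : Finset C) (X' : Finset V) (τ : V → D) : C → ℕ :=
  fun c => if c ∈ C' then min (S.cb X' τ c) (S.γ c) else 0

/-- The projection `proj(C', X') = { C'/τ : τ : X' → D }`. -/
def proj (S : SepSystem V C D) (C' : Finset C) (X' : Finset V) : Set (C → ℕ) :=
  { f | ∃ τ : V → D, f = S.cdiv C' X' τ }

end SepSystem
namespace SepSystem

variable {V C D : Type} [DecidableEq V] [DecidableEq C] [Fintype V] [Fintype C]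

/-- `τ` (restricted to `X_v`) has shape `(Φ, Ψ)` at a vertex `v` with variables `Xv`
and constraints `Cv`: conditions (S1), (S1*), (S2∈), (S2≥). -/
def HasShape (S : SepSystem V C D) (Xv : Finset V) (Cv : Finset C)
    (Φ Ψ : C → ℕ) (τ : V → D) : Prop :=
  (∀ c ∈ Cvᶜ, Φ c = min (S.cb Xv τ c) (S.γ c)) ∧
  (∀ c ∈ Cvᶜ ∩ S.Cin, S.cb Xv τ c ≤ S.γ c) ∧
  (∀ c ∈ Cv ∩ S.Cin, Ψ c + S.cb Xv τ c ∈ S.Γ c) ∧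
  (∀ c ∈ Cv ∩ S.Cge, S.γ c ≤ Ψ c + S.cb Xv τ c)

end SepSystem
namespace SepSystem

variable {V C D : Type} [DecidableEq V] [DecidableEq C] [Fintype V] [Fintype C]

/-- `(Φ,Ψ)`, `(Φ1,Ψ1)`, `(Φ2,Ψ2)` are linked shapes for an inner vertex `v`
(variables `Xv1 ∪ Xv2`, constraints `Cv1 ∪ Cv2`) with children `v1` and `v2`:
they are shapes, they satisfy (L1*), (L2*), (L3*) and the equations (L1), (L2), (L3). -/
def Linked (S : SepSystem V C D) (Xv1 Xv2 : Finset V) (Cv1 Cv2 : Finset C)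
    (Φ Ψ Φ1 Ψ1 Φ2 Ψ2 : C → ℕ) : Prop :=
  Ψ ∈ S.proj (Cv1 ∪ Cv2) (Xv1 ∪ Xv2)ᶜ ∧
  Φ1 ∈ S.proj Cv1ᶜ Xv1 ∧
  Φ2 ∈ S.proj Cv2ᶜ Xv2 ∧
  Φ ∈ S.proj (Cv1 ∪ Cv2)ᶜ (Xv1 ∪ Xv2) ∧
  Ψ1 ∈ S.proj Cv1 Xv1ᶜ ∧
  Ψ2 ∈ S.proj Cv2 Xv2ᶜ ∧
  (∀ c ∈ (Cv1 ∪ Cv2)ᶜ ∩ S.Cin, Φ1 c + Φ2 c ≤ S.γ c) ∧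
  (∀ c ∈ Cv1 ∩ S.Cin, Ψ c + Φ2 c ≤ S.γ c) ∧
  (∀ c ∈ Cv2 ∩ S.Cin, Ψ c + Φ1 c ≤ S.γ c) ∧
  (∀ c ∈ (Cv1 ∪ Cv2)ᶜ, Φ c = min (Φ1 c + Φ2 c) (S.γ c)) ∧
  (∀ c ∈ Cv1, Ψ1 c = min (Ψ c + Φ2 c) (S.γ c)) ∧
  (∀ c ∈ Cv2, Ψ2 c = min (Ψ c + Φ1 c) (S.γ c))

end SepSystem

/-!
The child shapes are forced. `Φᵢ` is the capped constraint bound of `τ` on `Xvᵢ`, and `Ψᵢ` is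
the projection of the assignment that agrees with `τ` on the sibling's variables and with a
witness `σ` of `Ψ` outside `Xv`; capping twice is harmless since
`min (a + min b γ) γ = min (a + b) γ`, which gives the linking equations. Conversely, members
of `proj C' X'` vanish off `C'`, so on the children they are pinned down by the shape
condition `(S1)` and by the linking equations `(L2)`, `(L3)`.
-/

namespace SepSystem

theorem min_add_min_cap (a b γ : ℕ) : min (a + min b γ) γ = min (a + b) γ := by omega

section Projections

variable {V C D : Type} [DecidableEq C] (S : SepSystem V C D)

theorem cdiv_apply_of_mem {C' : Finset C} {c : C} (hc : c ∈ C') (X' : Finset V) (τ : V → D) :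
    S.cdiv C' X' τ c = min (S.cb X' τ c) (S.γ c) :=
  if_pos hc

theorem cdiv_apply_of_notMem {C' : Finset C} {c : C} (hc : c ∉ C') (X' : Finset V) (τ : V → D) :
    S.cdiv C' X' τ c = 0 :=
  if_neg hc

theorem cdiv_le_cb (C' : Finset C) (X' : Finset V) (τ : V → D) (c : C) :
    S.cdiv C' X' τ c ≤ S.cb X' τ c := by
  unfold cdiv
  split_ifs <;> omega

variable {S}

theorem eq_of_mem_proj_of_eqOn {C' : Finset C} {X' X'' : Finset V} {f f' : C → ℕ}
    (hf : f ∈ S.proj C' X') (hf' : f' ∈ S.proj C' X'') (h : ∀ c ∈ C', f c = f' c) : f = f' := by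
  obtain ⟨τ, rfl⟩ := hf
  obtain ⟨τ', rfl⟩ := hf'
  funext c
  by_cases hc : c ∈ C'
  · exact h c hc
  · rw [S.cdiv_apply_of_notMem hc, S.cdiv_apply_of_notMem hc]

end Projections

section ConstraintBounds

variable {V C D : Type} (S : SepSystem V C D)

theorem cb_congr {X : Finset V} {τ τ' : V → D} (h : ∀ x ∈ X, τ x = τ' x) (c : C) :
    S.cb X τ c = S.cb X τ' c :=
  sum_congr rfl fun x hx => by rw [h x hx]

variable [DecidableEq V]

theorem cb_union {X1 X2 : Finset V} (hX : Disjoint X1 X2) (τ : V → D) (c : C) :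
    S.cb (X1 ∪ X2) τ c = S.cb X1 τ c + S.cb X2 τ c :=
  sum_union hX

theorem cb_compl_piecewise [Fintype V] {X1 X2 : Finset V} (hX : Disjoint X1 X2)
    (τ σ : V → D) (c : C) :
    S.cb X1ᶜ (X2.piecewise τ σ) c = S.cb X2 τ c + S.cb (X1 ∪ X2)ᶜ σ c := by
  have hsplit : X1ᶜ = X2 ∪ (X1 ∪ X2)ᶜ := by
    ext x
    have : x ∈ X2 → x ∉ X1 := fun h => disjoint_right.1 hX h
    simp only [mem_compl, mem_union]
    tauto
  have hdisj : Disjoint X2 (X1 ∪ X2)ᶜ := disjoint_compl_right.mono_left subset_union_right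
  rw [hsplit, S.cb_union hdisj,
    S.cb_congr (fun x hx => piecewise_eq_of_mem _ _ _ hx),
    S.cb_congr (fun x hx => piecewise_eq_of_notMem _ _ _ (disjoint_right.1 hdisj hx))]

end ConstraintBounds

section Shapes

variable {V C D : Type} [DecidableEq C] [Fintype C] {S : SepSystem V C D}
  {Xv : Finset V} {Cv : Finset C} {Φ Ψ : C → ℕ} {τ : V → D}

theorem HasShape.add_cb_le (h : S.HasShape Xv Cv Φ Ψ τ) {c : C} (hc : c ∈ Cv ∩ S.Cin) :
    Ψ c + S.cb Xv τ c ≤ S.γ c :=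
  S.gammaMax c (mem_inter.1 hc).2 _ (h.2.2.1 c hc)

theorem HasShape.add_cdiv_le [DecidableEq V] {X1 X2 : Finset V} {C1 C2 : Finset C}
    (hX : Disjoint X1 X2) (hτ : S.HasShape (X1 ∪ X2) (C1 ∪ C2) Φ Ψ τ)
    {c : C} (hc : c ∈ C1 ∩ S.Cin) : Ψ c + S.cdiv C2ᶜ X2 τ c ≤ S.γ c := by
  have hle := hτ.add_cb_le (inter_subset_inter subset_union_left Subset.rfl hc)
  rw [S.cb_union hX] at hle
  have := S.cdiv_le_cb C2ᶜ X2 τ c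
  omega

theorem HasShape.eq_cdiv (hΦ : Φ ∈ S.proj Cvᶜ Xv) (h : S.HasShape Xv Cv Φ Ψ τ) :
    Φ = S.cdiv Cvᶜ Xv τ :=
  eq_of_mem_proj_of_eqOn hΦ ⟨τ, rfl⟩ fun c hc => by rw [h.1 c hc, S.cdiv_apply_of_mem hc]

theorem Linked.eq_of_hasShape [DecidableEq V] [Fintype V]
    {Xv1 Xv2 : Finset V} {Cv1 Cv2 : Finset C}
    {Φ1 Ψ1 Φ2 Ψ2 Φ1' Ψ1' Φ2' Ψ2' : C → ℕ}
    (hL : S.Linked Xv1 Xv2 Cv1 Cv2 Φ Ψ Φ1 Ψ1 Φ2 Ψ2)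
    (h1 : S.HasShape Xv1 Cv1 Φ1 Ψ1 τ) (h2 : S.HasShape Xv2 Cv2 Φ2 Ψ2 τ)
    (hL' : S.Linked Xv1 Xv2 Cv1 Cv2 Φ Ψ Φ1' Ψ1' Φ2' Ψ2')
    (h1' : S.HasShape Xv1 Cv1 Φ1' Ψ1' τ) (h2' : S.HasShape Xv2 Cv2 Φ2' Ψ2' τ) :
    Φ1' = Φ1 ∧ Ψ1' = Ψ1 ∧ Φ2' = Φ2 ∧ Ψ2' = Ψ2 := by
  obtain ⟨-, hΦ1, hΦ2, -, hΨ1, hΨ2, -, -, -, -, hL2, hL3⟩ := hL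
  obtain ⟨-, hΦ1', hΦ2', -, hΨ1', hΨ2', -, -, -, -, hL2', hL3'⟩ := hL'
  have eΦ1 : Φ1' = Φ1 := (h1'.eq_cdiv hΦ1').trans (h1.eq_cdiv hΦ1).symm
  have eΦ2 : Φ2' = Φ2 := (h2'.eq_cdiv hΦ2').trans (h2.eq_cdiv hΦ2).symm
  refine ⟨eΦ1, ?_, eΦ2, ?_⟩
  · exact eq_of_mem_proj_of_eqOn hΨ1' hΨ1 fun c hc => by rw [hL2' c hc, hL2 c hc, eΦ2]
  · exact eq_of_mem_proj_of_eqOn hΨ2' hΨ2 fun c hc => by rw [hL3' c hc, hL3 c hc, eΦ1]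

end Shapes

section Restriction

variable {V C D : Type} [DecidableEq V] [DecidableEq C] [Fintype V]
  {S : SepSystem V C D} {X1 X2 : Finset V} {C1 C2 : Finset C} {Φ Ψ : C → ℕ} {σ τ : V → D}

theorem cdiv_compl_piecewise_apply (hX : Disjoint X1 X2)
    (hΨ : Ψ = S.cdiv (C1 ∪ C2) (X1 ∪ X2)ᶜ σ) {c : C} (hc : c ∈ C1) :
    S.cdiv C1 X1ᶜ (X2.piecewise τ σ) c = min (Ψ c + S.cb X2 τ c) (S.γ c) := by
  rw [S.cdiv_apply_of_mem hc, S.cb_compl_piecewise hX, hΨ,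
    S.cdiv_apply_of_mem (mem_union_left _ hc), add_comm (min _ _),
    min_add_min_cap]

variable [Fintype C]

theorem cdiv_compl_piecewise_eq_min_add (hX : Disjoint X1 X2) (hC : Disjoint C1 C2)
    (hΨ : Ψ = S.cdiv (C1 ∪ C2) (X1 ∪ X2)ᶜ σ) {c : C} (hc : c ∈ C1) :
    S.cdiv C1 X1ᶜ (X2.piecewise τ σ) c = min (Ψ c + S.cdiv C2ᶜ X2 τ c) (S.γ c) := by
  rw [cdiv_compl_piecewise_apply hX hΨ hc,
    S.cdiv_apply_of_mem (mem_compl.2 (disjoint_left.1 hC hc)), min_add_min_cap]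

theorem HasShape.restrict_left (hX : Disjoint X1 X2)
    (hΨ : Ψ = S.cdiv (C1 ∪ C2) (X1 ∪ X2)ᶜ σ)
    (hτ : S.HasShape (X1 ∪ X2) (C1 ∪ C2) Φ Ψ τ) :
    S.HasShape X1 C1 (S.cdiv C1ᶜ X1 τ) (S.cdiv C1 X1ᶜ (X2.piecewise τ σ)) τ := by
  refine ⟨fun c hc => S.cdiv_apply_of_mem hc _ _, fun c hc => ?_, fun c hc => ?_, fun c hc => ?_⟩
  · obtain ⟨hc1, hcin⟩ := mem_inter.1 hc
    by_cases hc2 : c ∈ C2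
    · have := hτ.add_cb_le (mem_inter.2 ⟨mem_union_right _ hc2, hcin⟩)
      rw [S.cb_union hX] at this
      omega
    · have hc12 : c ∈ (C1 ∪ C2)ᶜ := by
        rw [compl_union]
        exact mem_inter.2 ⟨hc1, mem_compl.2 hc2⟩
      have := hτ.2.1 c (mem_inter.2 ⟨hc12, hcin⟩)
      rw [S.cb_union hX] at this
      omega
  · have hc' : c ∈ (C1 ∪ C2) ∩ S.Cin := inter_subset_inter subset_union_left Subset.rfl hc
    have hΓ := hτ.2.2.1 c hc'
    have hle := hτ.add_cb_le hc'
    rw [S.cb_union hX] at hΓ hle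
    rw [cdiv_compl_piecewise_apply hX hΨ (mem_inter.1 hc).1]
    convert hΓ using 1
    omega
  · have hge := hτ.2.2.2 c (inter_subset_inter subset_union_left Subset.rfl hc)
    rw [S.cb_union hX] at hge
    rw [cdiv_compl_piecewise_apply hX hΨ (mem_inter.1 hc).1]
    omega

theorem HasShape.restrict_right (hX : Disjoint X1 X2)
    (hΨ : Ψ = S.cdiv (C1 ∪ C2) (X1 ∪ X2)ᶜ σ)
    (hτ : S.HasShape (X1 ∪ X2) (C1 ∪ C2) Φ Ψ τ) :
    S.HasShape X2 C2 (S.cdiv C2ᶜ X2 τ) (S.cdiv C2 X2ᶜ (X1.piecewise τ σ)) τ := by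
  rw [union_comm X1, union_comm C1] at hΨ hτ
  exact hτ.restrict_left hX.symm hΨ

theorem linked_of_hasShape (hX : Disjoint X1 X2) (hC : Disjoint C1 C2)
    (hΦ : Φ ∈ S.proj (C1 ∪ C2)ᶜ (X1 ∪ X2)) (hΨ : Ψ = S.cdiv (C1 ∪ C2) (X1 ∪ X2)ᶜ σ)
    (hτ : S.HasShape (X1 ∪ X2) (C1 ∪ C2) Φ Ψ τ) :
    S.Linked X1 X2 C1 C2 Φ Ψ (S.cdiv C1ᶜ X1 τ) (S.cdiv C1 X1ᶜ (X2.piecewise τ σ))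
      (S.cdiv C2ᶜ X2 τ) (S.cdiv C2 X2ᶜ (X1.piecewise τ σ)) := by
  have hΨ' : Ψ = S.cdiv (C2 ∪ C1) (X2 ∪ X1)ᶜ σ := by rw [hΨ, union_comm C1, union_comm X1]
  have hτ' : S.HasShape (X2 ∪ X1) (C2 ∪ C1) Φ Ψ τ := by rwa [union_comm X2, union_comm C2]
  have outside {c : C} (hc : c ∈ (C1 ∪ C2)ᶜ) : c ∈ C1ᶜ ∧ c ∈ C2ᶜ :=
    mem_inter.1 (compl_union C1 C2 ▸ hc)
  refine ⟨⟨σ, hΨ⟩, ⟨τ, rfl⟩, ⟨τ, rfl⟩, hΦ, ⟨_, rfl⟩, ⟨_, rfl⟩, fun c hc => ?_,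
    fun c hc => hτ.add_cdiv_le hX hc, fun c hc => hτ'.add_cdiv_le hX.symm hc, fun c hc => ?_,
    fun c hc => cdiv_compl_piecewise_eq_min_add hX hC hΨ hc,
    fun c hc => cdiv_compl_piecewise_eq_min_add hX.symm hC.symm hΨ' hc⟩
  · obtain ⟨hc1, hc2⟩ := outside (mem_inter.1 hc).1
    have := hτ.2.1 c hc
    rw [S.cb_union hX] at this
    rw [S.cdiv_apply_of_mem hc1, S.cdiv_apply_of_mem hc2]
    omega
  · obtain ⟨hc1, hc2⟩ := outside hc
    rw [hτ.1 c hc, S.cb_union hX, S.cdiv_apply_of_mem hc1, S.cdiv_apply_of_mem hc2]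
    omega

end Restriction

end SepSystem

/-- Lemma (from parent to children): if `(Φ,Ψ)` is a shape for an inner vertex `v` with
children `v1`, `v2` and `τ : X_v → D` has shape `(Φ,Ψ)`, then there is a unique pair of
shapes `((Φ1,Ψ1),(Φ2,Ψ2))` for `v1`, `v2` such that `(Φ,Ψ)`, `(Φ1,Ψ1)`, `(Φ2,Ψ2)` are
linked shapes and the restrictions `τ1`, `τ2` of `τ` have shapes `(Φ1,Ψ1)`, `(Φ2,Ψ2)`. -/
theorem SepSystem.unique_linked_of_hasShape {V C D : Type} [DecidableEq V] [DecidableEq C]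
    [Fintype V] [Fintype C] (S : SepSystem V C D)
    (Xv1 Xv2 : Finset V) (Cv1 Cv2 : Finset C)
    (hX : Disjoint Xv1 Xv2) (hC : Disjoint Cv1 Cv2)
    (Φ Ψ : C → ℕ)
    (hΦ : Φ ∈ S.proj (Cv1 ∪ Cv2)ᶜ (Xv1 ∪ Xv2))
    (hΨ : Ψ ∈ S.proj (Cv1 ∪ Cv2) (Xv1 ∪ Xv2)ᶜ)
    (τ : V → D)
    (hτ : S.HasShape (Xv1 ∪ Xv2) (Cv1 ∪ Cv2) Φ Ψ τ) :
    ∃! p : ((C → ℕ) × (C → ℕ)) × ((C → ℕ) × (C → ℕ)),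
      S.Linked Xv1 Xv2 Cv1 Cv2 Φ Ψ p.1.1 p.1.2 p.2.1 p.2.2 ∧
      S.HasShape Xv1 Cv1 p.1.1 p.1.2 τ ∧
      S.HasShape Xv2 Cv2 p.2.1 p.2.2 τ := by
  obtain ⟨σ, hσ⟩ := hΨ
  have hL := linked_of_hasShape hX hC hΦ hσ hτ
  have h1 := hτ.restrict_left hX hσ
  have h2 := hτ.restrict_right hX hσ
  refine ⟨((_, _), (_, _)), ⟨hL, h1, h2⟩, ?_⟩
  rintro ⟨⟨Φ1, Ψ1⟩, Φ2, Ψ2⟩ ⟨hL', h1', h2'⟩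
  obtain ⟨rfl, rfl, rfl, rfl⟩ := hL.eq_of_hasShape h1 h2 hL' h1' h2'
  rfl
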